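/- Arbitrarily large gap: for every real K > 0 there exists a prime d and a family of d² pure states {|Ψ_{y₀y₁}⟩} in ℂ^d such that H_∞(Y₀Y₁|E) = log₂ d ≥ 2K + 2, while for every classical-bit extension C consistent with the marginal, H_∞(Y_C | E, C) ≤ 1; hence H_∞(Y_C|E,C) < H_∞(Y₀Y₁|E)/2 − K. -/

import Mathlib

open Matrix Complex Finset
open scoped ComplexOrder

noncomputable section

def ω (d : ℕ) : ℂ := Complex.exp (2 * ↑Real.pi * Complex.I / (d : ℂ))

def Xp (d : ℕ) : Matrix (Fin d) (Fin d) ℂ :=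
  Matrix.of fun j k => if (j : ℕ) = ((k : ℕ) + 1) % d then 1 else 0

def Zp (d : ℕ) : Matrix (Fin d) (Fin d) ℂ :=
  Matrix.diagonal fun j => ω d ^ (j : ℕ)

def Fm (d : ℕ) : Matrix (Fin d) (Fin d) ℂ :=
  Matrix.of fun j k => ω d ^ ((j : ℕ) * (k : ℕ)) / ((Real.sqrt d : ℝ) : ℂ)

def ket (d : ℕ) (y : Fin d) : Fin d → ℂ := fun j => if j = y then 1 else 0

def e0 (d : ℕ) : Fin d → ℂ := fun j => if (j : ℕ) = 0 then 1 else 0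

def Psi (d : ℕ) : Fin d → ℂ :=
  (((Real.sqrt (2 * (1 + 1 / Real.sqrt d)) : ℝ) : ℂ))⁻¹ •
    (e0 d + (Fm d).mulVec (e0 d))

def dotc {d : ℕ} (v w : Fin d → ℂ) : ℂ := ∑ j, (starRingEnd ℂ) (v j) * w j

def outer {d : ℕ} (v : Fin d → ℂ) : Matrix (Fin d) (Fin d) ℂ :=
  Matrix.of fun i j => v i * (starRingEnd ℂ) (v j)

def enc (d : ℕ) (y₀ y₁ : Fin d) : Fin d → ℂ :=
  ((Xp d ^ (y₀ : ℕ)) * (Zp d ^ (y₁ : ℕ))).mulVec (Psi d)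

/-!
The d² states X^{y₀} Z^{y₁} Ψ resolve the identity: ∑_{y₀,y₁} |Ψ_{y₀y₁}⟩⟨Ψ_{y₀y₁}| = d · 1, since
summing the phases of Z^{y₁} kills the off-diagonal entries and the shifts X^{y₀} spread ‖Ψ‖² over
the diagonal. Hence the pretty good measurement (1/d) |Ψ_y⟩⟨Ψ_y| is a POVM guessing (Y₀, Y₁) with
probability 1/d, and no POVM does better, because tr (M_y |Ψ_y⟩⟨Ψ_y|) ≤ tr M_y and ∑ tr M_y = d.

On the other hand Ψ ∝ e₀ + F e₀ is balanced between the computational and the Fourier basis: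
X^{y₀} Z^{y₁} Ψ has squared overlap 1/2 + 1/(2√d) both with e_{y₀} and with the y₁-th Fourier
vector. So whichever bit C asks for, measuring in the matching basis guesses Y_C with probability
at least 1/2, whatever the joint distribution of C.
-/

lemma dotc_eq_star_dotProduct {d : ℕ} (v w : Fin d → ℂ) : dotc v w = star v ⬝ᵥ w := rfl

lemma outer_eq_vecMulVec {d : ℕ} (v : Fin d → ℂ) : outer v = vecMulVec v (star v) := rfl

lemma dotc_conj {d : ℕ} (v w : Fin d → ℂ) : starRingEnd ℂ (dotc v w) = dotc w v := by
  simp only [dotc, map_sum, map_mul, conj_conj, mul_comm]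

lemma dotc_col {d : ℕ} (A : Matrix (Fin d) (Fin d) ℂ) (v : Fin d) (x : Fin d → ℂ) :
    dotc (A.col v) x = (Aᴴ *ᵥ x) v := rfl

lemma posSemidef_outer {d : ℕ} (v : Fin d → ℂ) : (outer v).PosSemidef :=
  posSemidef_vecMulVec_self_star v

lemma trace_outer {d : ℕ} (v : Fin d → ℂ) : (outer v).trace = dotc v v := by
  rw [outer_eq_vecMulVec, trace_vecMulVec, dotProduct_comm]; rfl

lemma trace_mul_outer {d : ℕ} (A : Matrix (Fin d) (Fin d) ℂ) (v : Fin d → ℂ) :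
    (A * outer v).trace = dotc v (A *ᵥ v) := by
  rw [outer_eq_vecMulVec, mul_vecMulVec, trace_vecMulVec, dotProduct_comm]; rfl

lemma trace_outer_mul_outer {d : ℕ} (w v : Fin d → ℂ) :
    (outer w * outer v).trace = normSq (dotc w v) := by
  rw [trace_mul_outer, outer_eq_vecMulVec, vecMulVec_mulVec, op_smul_eq_smul,
    dotc_eq_star_dotProduct v, dotProduct_smul, ← dotc_eq_star_dotProduct,
    ← dotc_eq_star_dotProduct, smul_eq_mul, ← dotc_conj w v, mul_conj]

lemma re_trace_outer_col_mul_outer {d : ℕ} (A : Matrix (Fin d) (Fin d) ℂ) (v : Fin d)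
    (x : Fin d → ℂ) : (outer (A.col v) * outer x).trace.re = normSq ((Aᴴ *ᵥ x) v) := by
  rw [trace_outer_mul_outer, dotc_col, ofReal_re]

lemma sum_outer_col {d : ℕ} (A : Matrix (Fin d) (Fin d) ℂ) :
    ∑ v, outer (A.col v) = A * Aᴴ := by
  ext i j
  simp [outer, Matrix.mul_apply, Matrix.sum_apply]

lemma normSq_dotc_le {d : ℕ} (w v : Fin d → ℂ) :
    normSq (dotc w v) ≤ (dotc w w).re * (dotc v v).re := by
  have h (x y : Fin d → ℂ) : dotc x y = inner ℂ (WithLp.toLp 2 x) (WithLp.toLp 2 y) := by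
    rw [EuclideanSpace.inner_toLp_toLp, dotProduct_comm]; rfl
  have hn (x : Fin d → ℂ) : (dotc x x).re = ‖WithLp.toLp 2 x‖ ^ 2 := by
    rw [h]; exact inner_self_eq_norm_sq (𝕜 := ℂ) _
  rw [hn, hn, normSq_eq_norm_sq, h, ← mul_pow]
  gcongr
  exact norm_inner_le_norm _ _

lemma re_trace_mul_outer_le {d : ℕ} {M : Matrix (Fin d) (Fin d) ℂ} (hM : M.PosSemidef)
    {v : Fin d → ℂ} (hv : dotc v v = 1) : (M * outer v).trace.re ≤ M.trace.re := by
  obtain ⟨m, w, rfl⟩ := posSemidef_iff_eq_sum_vecMulVec.mp hM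
  simp only [← outer_eq_vecMulVec, Finset.sum_mul, trace_sum, re_sum, trace_outer_mul_outer,
    trace_outer, ofReal_re]
  gcongr with i
  simpa [hv] using normSq_dotc_le (w i) v

lemma sum_re_trace_mul_outer_le {ι : Type*} [Fintype ι] {d : ℕ}
    {M : ι → Matrix (Fin d) (Fin d) ℂ} (hM : ∀ y, (M y).PosSemidef) (hsum : ∑ y, M y = 1)
    {v : ι → Fin d → ℂ} (hv : ∀ y, dotc (v y) (v y) = 1) :
    ∑ y, (M y * outer (v y)).trace.re ≤ d :=
  calc ∑ y, (M y * outer (v y)).trace.re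
      ≤ ∑ y, (M y).trace.re := Finset.sum_le_sum fun y _ => re_trace_mul_outer_le (hM y) (hv y)
    _ = d := by rw [← re_sum, ← trace_sum, hsum, trace_one]; simp

lemma norm_omega (d : ℕ) : ‖ω d‖ = 1 := by
  simp [ω, Complex.norm_exp]

lemma normSq_omega (d : ℕ) : normSq (ω d) = 1 := by
  rw [normSq_eq_norm_sq, norm_omega, one_pow]

lemma conj_omega_pow_mul_self (d m : ℕ) : starRingEnd ℂ (ω d ^ m) * ω d ^ m = 1 := by
  rw [conj_mul', norm_pow, norm_omega]; simp

lemma omega_isPrimitiveRoot (d : ℕ) [NeZero d] : IsPrimitiveRoot (ω d) d :=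
  Complex.isPrimitiveRoot_exp d (NeZero.ne d)

lemma omega_pow_mod (d : ℕ) [NeZero d] (m : ℕ) : ω d ^ (m % d) = ω d ^ m := by
  simpa [← (omega_isPrimitiveRoot d).eq_orderOf] using pow_mod_orderOf (ω d) m

lemma omega_pow_val_add_mul (d : ℕ) [NeZero d] (k a : Fin d) (b : ℕ) :
    ω d ^ ((k + a : Fin d) * b : ℕ) = ω d ^ ((k : ℕ) * b) * ω d ^ ((a : ℕ) * b) := by
  rw [Fin.val_add, pow_mul, omega_pow_mod, ← pow_mul, add_mul, pow_add]

lemma sum_omega_pow_mul_conj (d : ℕ) [NeZero d] (m n : Fin d) :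
    ∑ b : Fin d, ω d ^ ((m : ℕ) * b) * starRingEnd ℂ (ω d ^ ((n : ℕ) * b))
      = if m = n then (d : ℂ) else 0 := by
  let z := ω d ^ (m : ℕ) * starRingEnd ℂ (ω d ^ (n : ℕ))
  have hterm (b : Fin d) :
      ω d ^ ((m : ℕ) * b) * starRingEnd ℂ (ω d ^ ((n : ℕ) * b)) = z ^ (b : ℕ) := by
    rw [mul_pow, pow_mul, pow_mul, map_pow]
  simp only [hterm, Fin.sum_univ_eq_sum_range (z ^ ·)]
  split_ifs with hmn
  · have hz : z = 1 := by
      subst hmn; exact (mul_comm _ _).trans (conj_omega_pow_mul_self d m)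
    simp [hz]
  · have hz : z ≠ 1 := by
      intro h
      refine hmn (Fin.ext ((omega_isPrimitiveRoot d).pow_inj m.isLt n.isLt ?_))
      calc ω d ^ (m : ℕ) = z * ω d ^ (n : ℕ) := by
            rw [mul_assoc, conj_omega_pow_mul_self, mul_one]
        _ = ω d ^ (n : ℕ) := by rw [h, one_mul]
    have hpow (k : ℕ) : (ω d ^ k) ^ d = 1 := by
      rw [← pow_mul, mul_comm, pow_mul, (omega_isPrimitiveRoot d).pow_eq_one, one_pow]
    have hzd : z ^ d = 1 := by rw [mul_pow, ← map_pow, hpow, hpow, map_one, mul_one]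
    rw [geom_sum_eq hz, hzd, sub_self, zero_div]

lemma Fm_mul_conjTranspose (d : ℕ) [NeZero d] : Fm d * (Fm d)ᴴ = 1 := by
  have hd : (d : ℂ) ≠ 0 := Nat.cast_ne_zero.mpr (NeZero.ne d)
  have hsq : ((√d : ℝ) : ℂ) * ((√d : ℝ) : ℂ) = d := by
    rw [← ofReal_mul, Real.mul_self_sqrt (Nat.cast_nonneg d), ofReal_natCast]
  ext j k
  have hsum := sum_omega_pow_mul_conj d j k
  simp only [Matrix.mul_apply, conjTranspose_apply, Fm, of_apply, star_div₀, star_def,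
    conj_ofReal, div_mul_div_comm, ← Finset.sum_div, hsq, hsum, one_apply]
  split_ifs <;> simp [hd]

lemma Xp_mulVec (d : ℕ) [NeZero d] (v : Fin d → ℂ) : Xp d *ᵥ v = fun j => v (j - 1) := by
  ext j
  have hshift (k : Fin d) : (j : ℕ) = ((k : ℕ) + 1) % d ↔ k = j - 1 := by
    rw [eq_sub_iff_add_eq, Fin.ext_iff, Fin.val_add, Fin.val_one', Nat.add_mod_mod, eq_comm]
  simp [Xp, mulVec, dotProduct, hshift]

open Fin.NatCast in
lemma Xp_pow_mulVec (d : ℕ) [NeZero d] (a : ℕ) (v : Fin d → ℂ) :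
    Xp d ^ a *ᵥ v = fun j => v (j - a) := by
  induction a with
  | zero => simp
  | succ a ih =>
    rw [pow_succ', ← mulVec_mulVec, ih, Xp_mulVec]
    ext j
    congr 1
    push_cast
    abel

lemma Zp_pow_mulVec (d b : ℕ) (v : Fin d → ℂ) :
    Zp d ^ b *ᵥ v = fun j : Fin d => ω d ^ ((j : ℕ) * b) * v j := by
  ext j
  rw [Zp, diagonal_pow, mulVec_diagonal, Pi.pow_apply, pow_mul]

lemma enc_apply (d : ℕ) [NeZero d] (a b j : Fin d) :
    enc d a b j = ω d ^ (((j - a : Fin d) : ℕ) * b) * Psi d (j - a) := by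
  rw [enc, ← mulVec_mulVec, Xp_pow_mulVec, Zp_pow_mulVec, Fin.cast_val_eq_self]

lemma enc_apply_self (d : ℕ) [NeZero d] (a b : Fin d) : enc d a b a = Psi d 0 := by
  simp [enc_apply]

lemma conj_enc_mul_enc (d : ℕ) [NeZero d] (a b j : Fin d) :
    starRingEnd ℂ (enc d a b j) * enc d a b j
      = starRingEnd ℂ (Psi d (j - a)) * Psi d (j - a) := by
  rw [enc_apply, map_mul, mul_mul_mul_comm, conj_omega_pow_mul_self, one_mul]

lemma sum_ite_zero_else_const {d : ℕ} [NeZero d] (A B : ℝ) :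
    ∑ j : Fin d, (if j = 0 then A else B) = A + (d - 1) * B :=
  calc ∑ j : Fin d, (if j = 0 then A else B)
      = ∑ j : Fin d, (B + if j = 0 then A - B else 0) := by
        congr 1; ext j; split_ifs <;> ring
    _ = A + (d - 1) * B := by
        simp only [Finset.sum_add_distrib, Finset.sum_const, Finset.card_univ, Fintype.card_fin,
          nsmul_eq_mul, Finset.sum_ite_eq', Finset.mem_univ, if_true]
        ring

lemma natCast_mul_inv_sqrt_sq (d : ℕ) [NeZero d] : (d : ℝ) * ((√d)⁻¹) ^ 2 = 1 := by
  rw [inv_pow, Real.sq_sqrt (Nat.cast_nonneg d)]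
  exact mul_inv_cancel₀ (Nat.cast_ne_zero.mpr (NeZero.ne d))

lemma sqrt_two_mul_sq (d : ℕ) : √(2 * (1 + (√d)⁻¹)) ^ 2 = 2 * (1 + (√d)⁻¹) :=
  Real.sq_sqrt (by positivity)

lemma Psi_apply (d : ℕ) [NeZero d] (j : Fin d) :
    Psi d j = ((if j = 0 then (1 + (√d)⁻¹) / √(2 * (1 + (√d)⁻¹))
      else (√d)⁻¹ / √(2 * (1 + (√d)⁻¹)) : ℝ) : ℂ) := by
  have hF : Fm d *ᵥ e0 d = fun _ => (((√d)⁻¹ : ℝ) : ℂ) := by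
    have : e0 d = Pi.single 0 1 := by
      ext j; simp [e0, Pi.single_apply, Fin.val_eq_zero_iff]
    ext j; simp [this, Fm]
  simp only [Psi, hF, e0, Fin.val_eq_zero_iff, Pi.smul_apply, Pi.add_apply, smul_eq_mul, one_div]
  split_ifs <;> push_cast <;> ring

lemma dotc_Psi_self (d : ℕ) [NeZero d] : dotc (Psi d) (Psi d) = 1 := by
  have h := natCast_mul_inv_sqrt_sq d
  have ht := sqrt_two_mul_sq d
  have hpos : 0 < √(2 * (1 + (√d)⁻¹)) := by positivity
  simp_rw [dotc, Psi_apply, conj_ofReal, ← ofReal_mul, ← ofReal_sum, ofReal_eq_one, ← sq,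
    ite_pow, sum_ite_zero_else_const]
  generalize √(2 * (1 + (√d)⁻¹)) = t at ht hpos ⊢
  generalize (√(d : ℝ))⁻¹ = s at h ht ⊢
  field_simp
  linear_combination h - ht

lemma inv_sqrt_mul_sum_Psi (d : ℕ) [NeZero d] :
    ((√d)⁻¹ : ℂ) * ∑ j, Psi d j = Psi d 0 := by
  have h := natCast_mul_inv_sqrt_sq d
  simp_rw [Psi_apply, ← ofReal_sum, sum_ite_zero_else_const, if_pos, ← ofReal_inv,
    ← ofReal_mul, ofReal_inj]
  generalize √(2 * (1 + (√d)⁻¹)) = t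
  generalize (√(d : ℝ))⁻¹ = s at h ⊢
  linear_combination (1 / t) * h

lemma normSq_Psi_zero (d : ℕ) [NeZero d] : normSq (Psi d 0) = (1 + (√d)⁻¹) / 2 := by
  have ht := sqrt_two_mul_sq d
  rw [Psi_apply, if_pos rfl, normSq_ofReal, ← sq, div_pow, ht]
  field_simp

lemma dotc_enc_self (d : ℕ) [NeZero d] (a b : Fin d) : dotc (enc d a b) (enc d a b) = 1 := by
  rw [dotc, ← dotc_Psi_self d, dotc]
  simp only [conj_enc_mul_enc]
  exact (Equiv.subRight a).sum_comp (fun j => starRingEnd ℂ (Psi d j) * Psi d j)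

lemma sum_outer_enc (d : ℕ) [NeZero d] :
    ∑ a : Fin d, ∑ b : Fin d, outer (enc d a b) = (d : ℂ) • 1 := by
  ext j k
  have hinner (a : Fin d) : ∑ b : Fin d, outer (enc d a b) j k
      = Psi d (j - a) * starRingEnd ℂ (Psi d (k - a)) *
          if j - a = k - a then (d : ℂ) else 0 := by
    rw [← sum_omega_pow_mul_conj, Finset.mul_sum]
    refine Finset.sum_congr rfl fun b _ => ?_
    simp only [outer, of_apply, enc_apply, map_mul]
    ring
  simp only [Matrix.sum_apply, hinner, sub_left_inj, Matrix.smul_apply, one_apply, smul_eq_mul]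
  split_ifs with hjk
  · subst hjk
    calc ∑ a, Psi d (j - a) * starRingEnd ℂ (Psi d (j - a)) * d
        = dotc (Psi d) (Psi d) * d := by
          rw [dotc, Finset.sum_mul, ← (Equiv.subLeft j).sum_comp]
          simp only [Equiv.subLeft_apply, sub_sub_cancel, mul_comm (Psi d _)]
      _ = d * 1 := by rw [dotc_Psi_self, one_mul, mul_one]
  · simp

lemma conjTranspose_Fm_mulVec_enc_apply (d : ℕ) [NeZero d] (a b : Fin d) :
    ((Fm d)ᴴ *ᵥ enc d a b) b = starRingEnd ℂ (ω d ^ ((a : ℕ) * b)) * Psi d 0 := by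
  rw [mulVec, dotProduct, ← Equiv.sum_comp (Equiv.addRight a), ← inv_sqrt_mul_sum_Psi,
    Finset.mul_sum, Finset.mul_sum]
  refine Finset.sum_congr rfl fun k _ => ?_
  simp only [Equiv.coe_addRight, conjTranspose_apply, Fm, of_apply, star_div₀, star_def,
    conj_ofReal, enc_apply, add_sub_cancel_right, omega_pow_val_add_mul, map_mul]
  linear_combination
    (starRingEnd ℂ (ω d ^ ((a : ℕ) * b)) * ((√d : ℝ) : ℂ)⁻¹ * Psi d k) *
      conj_omega_pow_mul_self d ((k : ℕ) * b)

lemma isGreatest_guessProb (d : ℕ) [NeZero d] :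
    IsGreatest {x : ℝ | ∃ M : Fin d × Fin d → Matrix (Fin d) (Fin d) ℂ,
        (∀ y, (M y).PosSemidef) ∧ (∑ y, M y = 1) ∧
        x = ((d : ℝ) ^ 2)⁻¹ * ∑ y₀ : Fin d, ∑ y₁ : Fin d,
          ((M (y₀, y₁) * outer (enc d y₀ y₁)).trace).re}
      ((d : ℝ)⁻¹) := by
  have hd : (d : ℝ) ≠ 0 := Nat.cast_ne_zero.mpr (NeZero.ne d)
  constructor
  · refine ⟨fun y => (d : ℂ)⁻¹ • outer (enc d y.1 y.2),
      fun y => (posSemidef_outer _).smul (by positivity), ?_, ?_⟩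
    · rw [← Finset.smul_sum, Fintype.sum_prod_type, sum_outer_enc, smul_smul,
        inv_mul_cancel₀ (by exact_mod_cast hd), one_smul]
    · have hterm (a b : Fin d) :
          (((d : ℂ)⁻¹ • outer (enc d a b)) * outer (enc d a b)).trace.re
            = (d : ℝ)⁻¹ := by
        rw [Matrix.smul_mul, trace_smul, trace_outer_mul_outer, dotc_enc_self]
        simp
      simp only [hterm, Finset.sum_const, Finset.card_univ, Fintype.card_fin, nsmul_eq_mul]
      field_simp
  · rintro x ⟨M, hM, hsum, rfl⟩
    have hbound := sum_re_trace_mul_outer_le hM hsum (v := fun y => enc d y.1 y.2)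
      fun y => dotc_enc_self d y.1 y.2
    rw [Fintype.sum_prod_type] at hbound
    calc ((d : ℝ) ^ 2)⁻¹ * ∑ y₀ : Fin d, ∑ y₁ : Fin d,
          ((M (y₀, y₁) * outer (enc d y₀ y₁)).trace).re
        ≤ ((d : ℝ) ^ 2)⁻¹ * d := by gcongr
      _ = (d : ℝ)⁻¹ := by field_simp

lemma exists_basis_measurement (d : ℕ) [NeZero d] (q : Fin d × Fin d → ℝ) :
    ∃ M : Fin 2 → Fin d → Matrix (Fin d) (Fin d) ℂ,
      (∀ c v, (M c v).PosSemidef) ∧ (∀ c, ∑ v, M c v = 1) ∧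
      ∑ c : Fin 2, ∑ y₀ : Fin d, ∑ y₁ : Fin d,
          (((d : ℝ) ^ 2)⁻¹ * (if c = 0 then q (y₀, y₁) else 1 - q (y₀, y₁))) *
            ((M c (if c = 0 then y₀ else y₁) * outer (enc d y₀ y₁)).trace).re
        = (1 + (√d)⁻¹) / 2 := by
  -- `c = 0` measures in the computational basis, `c = 1` in the Fourier basis.
  let U : Fin 2 → Matrix (Fin d) (Fin d) ℂ := ![1, Fm d]
  refine ⟨fun c v => outer ((U c).col v), fun c v => posSemidef_outer _, fun c => ?_, ?_⟩
  · rw [sum_outer_col]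
    fin_cases c
    · simp [U]
    · exact Fm_mul_conjTranspose d
  · have hcomputational (a b : Fin d) : (outer ((U 0).col a) * outer (enc d a b)).trace.re
        = (1 + (√d)⁻¹) / 2 := by
      simp [U, re_trace_outer_col_mul_outer, enc_apply_self, normSq_Psi_zero]
    have hfourier (a b : Fin d) : (outer ((U 1).col b) * outer (enc d a b)).trace.re
        = (1 + (√d)⁻¹) / 2 := by
      simp [U, re_trace_outer_col_mul_outer, conjTranspose_Fm_mulVec_enc_apply, normSq_Psi_zero,
        normSq_omega]
    simp only [Fin.sum_univ_two, if_pos, one_ne_zero, if_false, hcomputational, hfourier]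
    simp_rw [← Finset.sum_add_distrib, ← add_mul, ← mul_add, add_sub_cancel, mul_one]
    simp only [Finset.sum_const, Finset.card_univ, Fintype.card_fin, nsmul_eq_mul]
    field_simp [NeZero.ne d]

theorem stmt_17_general (K : ℝ) :
    ∃ d : ℕ, Nat.Prime d ∧ Real.logb 2 d ≥ 2 * K + 2 ∧
      (1 : ℝ) < Real.logb 2 d / 2 - K ∧
      (∀ y₀ y₁ : Fin d, dotc (enc d y₀ y₁) (enc d y₀ y₁) = 1) ∧
      IsGreatest {x : ℝ | ∃ M : Fin d × Fin d → Matrix (Fin d) (Fin d) ℂ,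
          (∀ y, (M y).PosSemidef) ∧ (∑ y, M y = 1) ∧
          x = ((d : ℝ) ^ 2)⁻¹ * ∑ y₀ : Fin d, ∑ y₁ : Fin d,
            ((M (y₀, y₁) * outer (enc d y₀ y₁)).trace).re}
        ((d : ℝ)⁻¹) ∧
      -Real.logb 2 ((d : ℝ)⁻¹) = Real.logb 2 d ∧
      ∀ q : Fin d × Fin d → ℝ, (∀ y, 0 ≤ q y) → (∀ y, q y ≤ 1) →
        ∃ (M : Fin 2 → Fin d → Matrix (Fin d) (Fin d) ℂ) (g : ℝ),
          (∀ c v, (M c v).PosSemidef) ∧ (∀ c, ∑ v, M c v = 1) ∧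
          g = ∑ c : Fin 2, ∑ y₀ : Fin d, ∑ y₁ : Fin d,
              (((d : ℝ) ^ 2)⁻¹ * (if c = 0 then q (y₀, y₁) else 1 - q (y₀, y₁))) *
                ((M c (if c = 0 then y₀ else y₁) * outer (enc d y₀ y₁)).trace).re ∧
          (1 : ℝ) / 2 ≤ g ∧ -Real.logb 2 g ≤ 1 := by
  obtain ⟨d, hd_large, hp⟩ := Nat.exists_infinite_primes (⌈(2 : ℝ) ^ (2 * K + 2)⌉₊ + 1)
  have : NeZero d := ⟨hp.ne_zero⟩
  have hlog : 2 * K + 2 < Real.logb 2 d := by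
    rw [Real.lt_logb_iff_rpow_lt one_lt_two (by exact_mod_cast hp.pos)]
    calc (2 : ℝ) ^ (2 * K + 2) ≤ ⌈(2 : ℝ) ^ (2 * K + 2)⌉₊ := Nat.le_ceil _
      _ < d := by exact_mod_cast Nat.lt_of_succ_le hd_large
  refine ⟨d, hp, hlog.le, by linarith, dotc_enc_self d, isGreatest_guessProb d,
    by rw [Real.logb_inv, neg_neg], fun q _ _ => ?_⟩
  obtain ⟨M, hM, hsum, hg⟩ := exists_basis_measurement d q
  have hhalf : (1 : ℝ) / 2 ≤ (1 + (√d)⁻¹) / 2 := by gcongr; simp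
  refine ⟨M, _, hM, hsum, hg.symm, hhalf, ?_⟩
  have := Real.logb_le_logb_of_le one_lt_two (by norm_num) hhalf
  rw [one_div, Real.logb_inv, Real.logb_self_eq_one one_lt_two] at this
  linarith

theorem stmt_17 (K : ℝ) (hK : 0 < K) :
    ∃ d : ℕ, Nat.Prime d ∧ Real.logb 2 d ≥ 2 * K + 2 ∧
      (1 : ℝ) < Real.logb 2 d / 2 - K ∧
      (∀ y₀ y₁ : Fin d, dotc (enc d y₀ y₁) (enc d y₀ y₁) = 1) ∧
      IsGreatest {x : ℝ | ∃ M : Fin d × Fin d → Matrix (Fin d) (Fin d) ℂ,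
          (∀ y, (M y).PosSemidef) ∧ (∑ y, M y = 1) ∧
          x = ((d : ℝ) ^ 2)⁻¹ * ∑ y₀ : Fin d, ∑ y₁ : Fin d,
            ((M (y₀, y₁) * outer (enc d y₀ y₁)).trace).re}
        ((d : ℝ)⁻¹) ∧
      -Real.logb 2 ((d : ℝ)⁻¹) = Real.logb 2 d ∧
      ∀ q : Fin d × Fin d → ℝ, (∀ y, 0 ≤ q y) → (∀ y, q y ≤ 1) →
        ∃ (M : Fin 2 → Fin d → Matrix (Fin d) (Fin d) ℂ) (g : ℝ),
          (∀ c v, (M c v).PosSemidef) ∧ (∀ c, ∑ v, M c v = 1) ∧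
          g = ∑ c : Fin 2, ∑ y₀ : Fin d, ∑ y₁ : Fin d,
              (((d : ℝ) ^ 2)⁻¹ * (if c = 0 then q (y₀, y₁) else 1 - q (y₀, y₁))) *
                ((M c (if c = 0 then y₀ else y₁) * outer (enc d y₀ y₁)).trace).re ∧
          (1 : ℝ) / 2 ≤ g ∧ -Real.logb 2 g ≤ 1 :=
  stmt_17_general K
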